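/- If u is primitive and three squares u₁u₁ ⊏ u₂u₂ ⊏ u₃u₃ are nested proper prefixes with u₁ primitive, then |u₃| ≥ |u₁| + |u₂|; consequently, lengths of primitive roots of nested primitively rooted square prefixes grow at least as fast as Fibonacci numbers. -/

import Mathlib

/-- A string is primitive if it is not a power `x^t` with `t ≥ 2`. -/
def IsPrimitive {α : Type*} (u : List α) : Prop :=
  u ≠ [] ∧ ∀ (x : List α) (t : ℕ), 2 ≤ t → u ≠ (List.replicate t x).flatten

/-!
Write `p = |u₁|`, `q = |u₂|`, `r = |u₃|`. The square `u₂u₂` has period `q` and, as a prefix of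
`u₃u₃`, period `r`; hence `u₂` has period `s = r - q > 0`, and it suffices to show `p ≤ s`.
If `s < p`, the Fine–Wilf periodicity lemma yields a period of `u₁` that properly divides `p`,
contradicting primitivity. When `p + s ≤ q`, the prefix of length `p + s` of `u₂u₂` has the
periods `p` and `s`. When `q < p + s`, the word `u₂` is a prefix of `u₁u₁` with periods `p` and
`s`, and `u₁` has period `m = q - p`; then `u₂` with its first `s` letters removed is a prefix of
`u₁` with periods `m` and `p - s`, so `u₁` has period `gcd m (p - s)` (a divisor of `m`), and
finally period `gcd (gcd m (p - s)) s`, which divides `(p - s) + s = p`.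
-/

namespace List

variable {α : Type*} {u v w : List α} {g m n s : ℕ}

theorem hasPeriod_length_append_self (u : List α) : (u ++ u).HasPeriod u.length := by
  rw [HasPeriod, take_left, prefix_append_right_inj]
  exact prefix_append u u

theorem HasPeriod.take_drop_eq_take (h : w.HasPeriod g) (hg : 2 * g ≤ w.length) :
    (w.drop g).take g = w.take g := by
  rw [prefix_iff_eq_take.mp (h.drop_prefix g), take_take, min_eq_left (by simp; omega)]

theorem HasPeriod.eq_flatten_replicate_take (h : w.HasPeriod g) {k : ℕ}
    (hlen : w.length = k * g) : w = (replicate k (w.take g)).flatten := by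
  induction k generalizing w with
  | zero => simpa using hlen
  | succ k ih =>
    have hdrop := ih (h.infix (drop_suffix g w).isInfix)
      (by rw [length_drop, hlen, Nat.succ_mul, Nat.add_sub_cancel])
    rcases Nat.eq_zero_or_pos k with rfl | hk
    · simp [take_of_length_le (by simp [hlen] : w.length ≤ g)]
    rw [h.take_drop_eq_take (by rw [hlen]; nlinarith)] at hdrop
    rw [replicate_succ, flatten_cons, ← hdrop, take_append_drop]

theorem length_lt_of_append_self_prefix (h : u ++ u <+: v ++ v) (hne : u ++ u ≠ v ++ v) :
    u.length < v.length := by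
  have hle := h.length_le
  simp only [length_append] at hle
  refine lt_of_le_of_ne (by omega) fun heq => hne (h.eq_of_length ?_)
  simp [heq]

theorem hasPeriod_sub_length_of_append_self_prefix (h : u ++ u <+: v ++ v)
    (hle : u.length ≤ v.length) : u.HasPeriod (v.length - u.length) := by
  have hv : (u ++ u).HasPeriod (v.length - u.length + u.length) := by
    rw [Nat.sub_add_cancel hle]
    exact (hasPeriod_length_append_self v).infix h.isInfix
  simpa using (hasPeriod_length_append_self u).drop_of_hasPeriod_add hv

theorem HasPeriod.of_take (hm : w.HasPeriod m) (hm0 : 0 < m) (hmn : m ≤ n)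
    (hg : (w.take n).HasPeriod g) (hgm : g ∣ m) : w.HasPeriod g := by
  have hg0 : 0 < g := Nat.pos_of_dvd_of_pos hgm hm0
  have hgn : g ≤ n := (Nat.le_of_dvd hm0 hgm).trans hmn
  rw [hasPeriod_iff_forall_getElem?_mod] at hm hg ⊢
  intro i hi
  have hmod : i % m < n := (Nat.mod_lt i hm0).trans_le hmn
  have := Nat.mod_le i m
  calc w[i]? = w[i % m]? := hm i hi
    _ = (w.take n)[i % m]? := (getElem?_take_of_lt hmod).symm
    _ = (w.take n)[i % g]? := by
      rw [hg _ (by simp; omega), Nat.mod_mod_of_dvd i hgm]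
    _ = w[i % g]? := getElem?_take_of_lt ((Nat.mod_lt i hg0).trans_le hgn)

end List

open List

section

variable {α : Type*} {u v w : List α} {a b s : ℕ}

theorem IsPrimitive.eq_length_of_hasPeriod (hu : IsPrimitive u) (h : u.HasPeriod a)
    (hdvd : a ∣ u.length) : a = u.length := by
  obtain ⟨k, hk⟩ := hdvd
  have hlen : u.length = k * a := by rw [hk, Nat.mul_comm]
  have hpos : 0 < u.length := length_pos_iff.mpr hu.1
  by_contra hne
  have hk2 : 2 ≤ k := by
    rcases k with _ | _ | k <;> simp_all
  exact hu.2 _ k hk2 (h.eq_flatten_replicate_take hlen)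

theorem IsPrimitive.gcd_eq_length (hu : IsPrimitive u) (huw : u <:+: w) (ha : w.HasPeriod a)
    (hb : w.HasPeriod b) (hlen : a + b - a.gcd b ≤ w.length) (hdvd : a.gcd b ∣ u.length) :
    a.gcd b = u.length :=
  hu.eq_length_of_hasPeriod ((ha.gcd hb hlen).infix huw) hdvd

theorem IsPrimitive.not_hasPeriod_of_add_le_length (hu : IsPrimitive u) (h : u ++ u <+: v ++ v)
    (hs0 : 0 < s) (hsu : s < u.length) (hlen : u.length + s ≤ v.length) : ¬ v.HasPeriod s := by
  intro hv
  set w := (v ++ v).take (u.length + s)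
  have hw : w.length = u.length + s := by simp [w]; omega
  have hwu : w <+: u ++ u := prefix_of_prefix_length_le (take_prefix _ _) h (by simp; omega)
  have hwv : w <+: v := prefix_of_prefix_length_le (take_prefix _ _) (prefix_append v v) (by omega)
  have huw : u <+: w := prefix_of_prefix_length_le (prefix_append u u) hwu (by omega)
  have hgcd := hu.gcd_eq_length huw.isInfix ((hasPeriod_length_append_self u).infix hwu.isInfix)
    (hv.infix hwv.isInfix) (by omega) (Nat.gcd_dvd_left _ _)
  have := Nat.gcd_le_right (m := u.length) (n := s) hs0
  omega

theorem IsPrimitive.not_hasPeriod_of_length_lt_add (hu : IsPrimitive u) (h : u ++ u <+: v ++ v)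
    (hlt : u.length < v.length) (hsu : s < u.length) (hlen : v.length < u.length + s) :
    ¬ v.HasPeriod s := by
  intro hv
  set p := u.length
  set m := v.length - p
  set c := p - s
  have hvu : v <+: u ++ u := prefix_of_prefix_length_le (prefix_append v v) h (by simp; omega)
  have huv : u <+: v := prefix_of_prefix_length_le (prefix_append u u) hvu hlt.le
  have hum : u.HasPeriod m := hasPeriod_sub_length_of_append_self_prefix h hlt.le
  have hvc : (v.drop s).HasPeriod c := hv.drop_of_hasPeriod_add
    (by rw [show c + s = p by omega]; exact (hasPeriod_length_append_self u).infix hvu.isInfix)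
  have htu : v.drop s <+: u :=
    prefix_of_prefix_length_le (hv.drop_prefix s) huv (by simp; omega)
  have ht : (v.drop s).length = m + c := by simp; omega
  have htg : (v.drop s).HasPeriod (m.gcd c) :=
    (hum.infix htu.isInfix).gcd hvc (by omega)
  have hug : u.HasPeriod (m.gcd c) :=
    hum.of_take (by omega) (n := m + c) (by omega) (by rwa [← ht, ← prefix_iff_eq_take.mp htu])
      (Nat.gcd_dvd_left m c)
  have hdvd : (m.gcd c).gcd s ∣ p := by
    rw [show p = c + s by omega]
    exact Nat.dvd_add ((Nat.gcd_dvd_left _ _).trans (Nat.gcd_dvd_right m c)) (Nat.gcd_dvd_right _ s)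
  have hgcd := hu.gcd_eq_length (infix_refl u) hug (hv.infix huv.isInfix)
    (by have := Nat.gcd_le_right (m := m) (n := c) (by omega); omega) hdvd
  have := Nat.gcd_le_right (m := m.gcd c) (n := s) (by omega)
  omega

theorem IsPrimitive.length_le_of_hasPeriod (hu : IsPrimitive u) (h : u ++ u <+: v ++ v)
    (hlt : u.length < v.length) (hv : v.HasPeriod s) (hs0 : 0 < s) : u.length ≤ s := by
  by_contra! hsu
  rcases le_or_gt (u.length + s) v.length with hle | hgt
  · exact hu.not_hasPeriod_of_add_le_length h hs0 hsu hle hv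
  · exact hu.not_hasPeriod_of_length_lt_add h hlt hsu hgt hv

end

/-- Three Squares Lemma (Crochemore–Rytter): if `u₁u₁` is a proper prefix of `u₂u₂`,
`u₂u₂` is a proper prefix of `u₃u₃`, and `u₁` is primitive, then `|u₃| ≥ |u₁| + |u₂|`. -/
theorem stmt17 {α : Type*} (u₁ u₂ u₃ : List α)
    (h1 : IsPrimitive u₁)
    (h12 : (u₁ ++ u₁) <+: (u₂ ++ u₂)) (h12' : u₁ ++ u₁ ≠ u₂ ++ u₂)
    (h23 : (u₂ ++ u₂) <+: (u₃ ++ u₃)) (h23' : u₂ ++ u₂ ≠ u₃ ++ u₃) :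
    u₁.length + u₂.length ≤ u₃.length := by
  have hpq := length_lt_of_append_self_prefix h12 h12'
  have hqr := length_lt_of_append_self_prefix h23 h23'
  have hps := h1.length_le_of_hasPeriod h12 hpq
    (hasPeriod_sub_length_of_append_self_prefix h23 hqr.le) (by omega)
  omega
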